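/- Let F = {0, s, p, −, ÷} with 0 a constant, s and p unary, and − and ÷ binary, and let A be the ordered (F ∪ F#)-algebra on ℕ (with the standard order) given by 0_A = 0, s_A(x) = x + 1, p_A(x) = x, x −_A y = x, x ÷_A y = x, 0#_A = 0, s#_A(x) = 0, p#_A(x) = 0, x −#_A y = y, x ÷#_A y = x + y. Then for every precedence ≿ on F, the generalized weighted path order >_gwpo induced by A and ≿ orients all six rules of the round-up division TRS: p(0) >_gwpo 0, p(s(x)) >_gwpo x, x − 0 >_gwpo x, x − s(y) >_gwpo p(x) − y, 0 ÷ s(y) >_gwpo 0, and s(x) ÷ s(y) >_gwpo s((x − y) ÷ s(y)). -/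
import Mathlib


/-- First-order terms over a signature `F` with arity function `ar` and variables `V`. -/
inductive Term (F : Type) (ar : F → ℕ) (V : Type) : Type where
  | var : V → Term F ar V
  | app : (f : F) → (Fin (ar f) → Term F ar V) → Term F ar V

namespace Term

variable {F V : Type} {ar : F → ℕ}

/-- Application of a substitution `σ : V → Term F ar V` to a term. -/
def subst (σ : V → Term F ar V) : Term F ar V → Term F ar V
  | var v => σ v
  | app f args => app f (fun i => (args i).subst σ)

/-- Interpretation of a term in an `F`-algebra with carrier `A` under assignment `α`. -/
def eval {A : Type} (I : (f : F) → (Fin (ar f) → A) → A) (α : V → A) :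
    Term F ar V → A
  | var v => α v
  | app f args => I f (fun i => (args i).eval I α)

/-- A term is a non-variable term (function application). -/
def IsApp : Term F ar V → Prop
  | var _ => False
  | app _ _ => True

end Term

section Algebra

variable {F V A : Type}

/-- `RC lt a b` : reflexive closure of the strict order `lt`, i.e. `a ≤ b`. -/
def RC (lt : A → A → Prop) (a b : A) : Prop := lt a b ∨ a = b

variable (ar : F → ℕ) (I : (f : F) → (Fin (ar f) → A) → A) (lt : A → A → Prop)

/-- `s >_A t` : `[α](t) < [α](s)` for every assignment `α`. -/
def GTA (s t : Term F ar V) : Prop := ∀ α : V → A, lt (t.eval I α) (s.eval I α)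

/-- `s ≥_A t` : `[α](t) ≤ [α](s)` for every assignment `α`. -/
def GEA (s t : Term F ar V) : Prop := ∀ α : V → A, RC lt (t.eval I α) (s.eval I α)

/-- The algebra is simple: `f_A(a_1, …, a_n) ≥ a_i`. -/
def Simple : Prop := ∀ (f : F) (as : Fin (ar f) → A) (i : Fin (ar f)), RC lt (as i) (I f as)

/-- The algebra is weakly monotone: `a_i > b` implies
`f_A(a_1,…,a_i,…,a_n) ≥ f_A(a_1,…,b,…,a_n)`. -/
def WeaklyMonotone : Prop :=
  ∀ (f : F) (as : Fin (ar f) → A) (i : Fin (ar f)) (b : A),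
    lt b (as i) → RC lt (I f (Function.update as i b)) (I f as)

end Algebra

section WPO

variable {F V A : Type} (ar : F → ℕ) (I : (f : F) → (Fin (ar f) → A) → A)
  (lt : A → A → Prop) (prec : F → F → Prop)

mutual
  /-- The weighted path order induced by the algebra `(A, I, lt)` and the precedence `prec`. -/
  inductive WPO : Term F ar V → Term F ar V → Prop where
    /-- (1) `s >_A t`. -/
    | alg {s t} : GTA ar I lt s t → WPO s t
    /-- (2a) `s ≥_A t` and `s_i >_wpo t`. -/
    | sub {f ss t} (i : Fin (ar f)) :
        GEA ar I lt (Term.app f ss) t → WPO (ss i) t → WPO (Term.app f ss) t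
    /-- (2a) `s ≥_A t` and `s_i = t`. -/
    | subEq {f ss t} (i : Fin (ar f)) :
        GEA ar I lt (Term.app f ss) t → ss i = t → WPO (Term.app f ss) t
    /-- (2b-i) `s ≥_A t`, `s >_wpo t_j` for all `j`, and `f ≻ g`. -/
    | prc {f ss g ts} :
        GEA ar I lt (Term.app f ss) (Term.app g ts) →
        (∀ j, WPO (Term.app f ss) (ts j)) →
        prec f g → ¬ prec g f → WPO (Term.app f ss) (Term.app g ts)
    /-- (2b-ii) `s ≥_A t`, `s >_wpo t_j` for all `j`, `f ≿ g` and lex comparison of arguments. -/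
    | lex {f ss g ts} :
        GEA ar I lt (Term.app f ss) (Term.app g ts) →
        (∀ j, WPO (Term.app f ss) (ts j)) →
        prec f g → WPOLex (List.ofFn ss) (List.ofFn ts) →
        WPO (Term.app f ss) (Term.app g ts)

  /-- Lexicographic extension of `WPO` to argument lists (of possibly different lengths). -/
  inductive WPOLex : List (Term F ar V) → List (Term F ar V) → Prop where
    | head {s t l₁ l₂} : WPO s t → WPOLex (s :: l₁) (t :: l₂)
    | tail {s l₁ l₂} : WPOLex l₁ l₂ → WPOLex (s :: l₁) (s :: l₂)
    | longer {s l₁} : WPOLex (s :: l₁) []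
end

end WPO

section SPO

variable {F V : Type} {ar : F → ℕ} (qge qgt : Term F ar V → Term F ar V → Prop)

mutual
  /-- The semantic path order induced by the order pair `(qge, qgt)` (`⊒∼`, `⊐`). -/
  inductive SPO : Term F ar V → Term F ar V → Prop where
    /-- (1) `s_i >_spo t`. -/
    | sub {f ss t} (i : Fin (ar f)) : SPO (ss i) t → SPO (Term.app f ss) t
    /-- (1) `s_i = t`. -/
    | subEq {f ss t} (i : Fin (ar f)) : ss i = t → SPO (Term.app f ss) t
    /-- (2a) `s >_spo t_j` for all `j` and `s ⊐ t`. -/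
    | gt {f ss g ts} : (∀ j, SPO (Term.app f ss) (ts j)) →
        qgt (Term.app f ss) (Term.app g ts) → SPO (Term.app f ss) (Term.app g ts)
    /-- (2b) `s >_spo t_j` for all `j`, `s ⊒∼ t` and lex comparison of arguments. -/
    | lex {f ss g ts} : (∀ j, SPO (Term.app f ss) (ts j)) →
        qge (Term.app f ss) (Term.app g ts) →
        SPOLex (List.ofFn ss) (List.ofFn ts) → SPO (Term.app f ss) (Term.app g ts)

  /-- Lexicographic extension of `SPO` to argument lists. -/
  inductive SPOLex : List (Term F ar V) → List (Term F ar V) → Prop where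
    | head {s t l₁ l₂} : SPO s t → SPOLex (s :: l₁) (t :: l₂)
    | tail {s l₁ l₂} : SPOLex l₁ l₂ → SPOLex (s :: l₁) (s :: l₂)
    | longer {s l₁} : SPOLex (s :: l₁) []
end

end SPO

section Props

variable {F V : Type} {ar : F → ℕ}

/-- Closure under contexts: replacing one argument. -/
def ClosedCtx (R : Term F ar V → Term F ar V → Prop) : Prop :=
  ∀ (f : F) (args : Fin (ar f) → Term F ar V) (i : Fin (ar f)) (s t : Term F ar V),
    R s t → R (Term.app f (Function.update args i s)) (Term.app f (Function.update args i t))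

/-- Closure under substitutions. -/
def ClosedSubst (R : Term F ar V → Term F ar V → Prop) : Prop :=
  ∀ (σ : V → Term F ar V) (s t : Term F ar V), R s t → R (s.subst σ) (t.subst σ)

/-- A reduction order: a well-founded strict order closed under contexts and substitutions. -/
def ReductionOrder (R : Term F ar V → Term F ar V → Prop) : Prop :=
  (∀ s, ¬ R s s) ∧ Transitive R ∧ WellFounded (fun s t => R t s) ∧
    ClosedCtx R ∧ ClosedSubst R

/-- `Subterm t s` : `t` is a subterm of `s`. -/
inductive Subterm : Term F ar V → Term F ar V → Prop where
  | refl {t} : Subterm t t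
  | arg {t f ss} (i : Fin (ar f)) : Subterm t (ss i) → Subterm t (Term.app f ss)

/-- `ProperSubterm t s` : `t` is a proper subterm of `s`. -/
def ProperSubterm (t s : Term F ar V) : Prop :=
  ∃ (f : F) (ss : Fin (ar f) → Term F ar V) (i : Fin (ar f)),
    s = Term.app f ss ∧ Subterm t (ss i)

/-- The rewrite relation of a TRS `R`: closure of the rules under substitutions and contexts. -/
inductive Rewrite (R : Set (Term F ar V × Term F ar V)) : Term F ar V → Term F ar V → Prop where
  | rule {l r} (σ : V → Term F ar V) : (l, r) ∈ R → Rewrite R (l.subst σ) (r.subst σ)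
  | ctx {s t} (f : F) (args : Fin (ar f) → Term F ar V) (i : Fin (ar f)) :
      Rewrite R s t →
      Rewrite R (Term.app f (Function.update args i s)) (Term.app f (Function.update args i t))

end Props

section Pair

variable {F V A : Type} (ar : F → ℕ) (I : (f : F) → (Fin (ar f) → A) → A)
  (lt : A → A → Prop) (prec : F → F → Prop)

/-- `s ⊒∼ t` : both non-variable, and `s >_A t`, or `s ≥_A t` and `root(s) ≿ root(t)`. -/
def QGE (s t : Term F ar V) : Prop :=
  ∃ (f : F) (ss : Fin (ar f) → Term F ar V) (g : F) (ts : Fin (ar g) → Term F ar V),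
    s = Term.app f ss ∧ t = Term.app g ts ∧
      (GTA ar I lt s t ∨ (GEA ar I lt s t ∧ prec f g))

/-- `s ⊐ t` : both non-variable, and `s >_A t`, or `s ≥_A t` and `root(s) ≻ root(t)`. -/
def QGT (s t : Term F ar V) : Prop :=
  ∃ (f : F) (ss : Fin (ar f) → Term F ar V) (g : F) (ts : Fin (ar g) → Term F ar V),
    s = Term.app f ss ∧ t = Term.app g ts ∧
      (GTA ar I lt s t ∨ (GEA ar I lt s t ∧ prec f g ∧ ¬ prec g f))

variable (Im : (f : F) → (Fin (ar f) → A) → A)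

/-- Interpretation of the marked term `t♯` (root symbol interpreted by `Im`). -/
def evalSharp (α : V → A) : Term F ar V → A
  | .var v => α v
  | .app f ts => Im f (fun i => (ts i).eval I α)

/-- `s♯ >_A t♯`. -/
def GTAS (s t : Term F ar V) : Prop :=
  ∀ α : V → A, lt (evalSharp ar I Im α t) (evalSharp ar I Im α s)

/-- `s♯ ≥_A t♯`. -/
def GEAS (s t : Term F ar V) : Prop :=
  ∀ α : V → A, RC lt (evalSharp ar I Im α t) (evalSharp ar I Im α s)

/-- Marked version of `⊒∼` : `s♯ >_A t♯`, or `s♯ ≥_A t♯` and `root(s) ≿ root(t)`. -/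
def QGES (s t : Term F ar V) : Prop :=
  ∃ (f : F) (ss : Fin (ar f) → Term F ar V) (g : F) (ts : Fin (ar g) → Term F ar V),
    s = Term.app f ss ∧ t = Term.app g ts ∧
      (GTAS ar I lt Im s t ∨ (GEAS ar I lt Im s t ∧ prec f g))

/-- Marked version of `⊐` : `s♯ >_A t♯`, or `s♯ ≥_A t♯` and `root(s) ≻ root(t)`. -/
def QGTS (s t : Term F ar V) : Prop :=
  ∃ (f : F) (ss : Fin (ar f) → Term F ar V) (g : F) (ts : Fin (ar g) → Term F ar V),
    s = Term.app f ss ∧ t = Term.app g ts ∧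
      (GTAS ar I lt Im s t ∨ (GEAS ar I lt Im s t ∧ prec f g ∧ ¬ prec g f))

/-- The generalized weighted path order: `s ≥_A t` and `s >_spo t` for the SPO induced
from the marked order pair. -/
def GWPO (s t : Term F ar V) : Prop :=
  GEA ar I lt s t ∧ SPO (QGES ar I lt prec Im) (QGTS ar I lt prec Im) s t

end Pair

/-- Signature `{0, s, p, −, ÷}`: symbol `0` is `zero` (arity 0), `1` is `s`, `2` is `p`
(arity 1), `3` is `−`, `4` is `÷` (arity 2). -/
def ar16 : Fin 5 → ℕ
  | ⟨0, _⟩ => 0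
  | ⟨1, _⟩ => 1
  | ⟨2, _⟩ => 1
  | ⟨3, _⟩ => 2
  | ⟨4, _⟩ => 2

/-- Interpretations of the unmarked symbols on `ℕ`:
`0_A = 0`, `s_A(x) = x + 1`, `p_A(x) = x`, `x −_A y = x`, `x ÷_A y = x`. -/
def I16 : (f : Fin 5) → (Fin (ar16 f) → ℕ) → ℕ
  | ⟨0, _⟩, _ => 0
  | ⟨1, _⟩, a => Matrix.vecHead a + 1
  | ⟨2, _⟩, a => Matrix.vecHead a
  | ⟨3, _⟩, a => Matrix.vecHead a
  | ⟨4, _⟩, a => Matrix.vecHead a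

/-- Interpretations of the marked symbols on `ℕ`:
`0♯_A = 0`, `s♯_A(x) = 0`, `p♯_A(x) = 0`, `x −♯_A y = y`, `x ÷♯_A y = x + y`. -/
def Im16 : (f : Fin 5) → (Fin (ar16 f) → ℕ) → ℕ
  | ⟨0, _⟩, _ => 0
  | ⟨1, _⟩, _ => 0
  | ⟨2, _⟩, _ => 0
  | ⟨3, _⟩, a => Matrix.vecHead (Matrix.vecTail a)
  | ⟨4, _⟩, a => Matrix.vecHead a + Matrix.vecHead (Matrix.vecTail a)

/-- The constant `0`. -/
abbrev z16 : Term (Fin 5) ar16 ℕ := Term.app 0 ![]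
/-- `s(t)`. -/
abbrev s16 (t : Term (Fin 5) ar16 ℕ) : Term (Fin 5) ar16 ℕ := Term.app 1 ![t]
/-- `p(t)`. -/
abbrev p16 (t : Term (Fin 5) ar16 ℕ) : Term (Fin 5) ar16 ℕ := Term.app 2 ![t]
/-- `t − u`. -/
abbrev sub16 (t u : Term (Fin 5) ar16 ℕ) : Term (Fin 5) ar16 ℕ := Term.app 3 ![t, u]
/-- `t ÷ u`. -/
abbrev div16 (t u : Term (Fin 5) ar16 ℕ) : Term (Fin 5) ar16 ℕ := Term.app 4 ![t, u]
/-- The variable `x`. -/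
abbrev x16 : Term (Fin 5) ar16 ℕ := Term.var 0
/-- The variable `y`. -/
abbrev y16 : Term (Fin 5) ar16 ℕ := Term.var 1

/-- For every precedence `≿` on the signature, the generalized weighted
path order induced by the given `(F ∪ F♯)`-algebra on `ℕ` orients all six rules of the
round-up division TRS. -/
theorem gwpo_orients_division
    (prec : Fin 5 → Fin 5 → Prop) (prec_refl : ∀ f, prec f f)
    (prec_trans : ∀ f g h, prec f g → prec g h → prec f h) :
    GWPO ar16 I16 (· < ·) prec Im16 (p16 z16) z16 ∧
    GWPO ar16 I16 (· < ·) prec Im16 (p16 (s16 x16)) x16 ∧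
    GWPO ar16 I16 (· < ·) prec Im16 (sub16 x16 z16) x16 ∧
    GWPO ar16 I16 (· < ·) prec Im16 (sub16 x16 (s16 y16)) (sub16 (p16 x16) y16) ∧
    GWPO ar16 I16 (· < ·) prec Im16 (div16 z16 (s16 y16)) z16 ∧
    GWPO ar16 I16 (· < ·) prec Im16 (div16 (s16 x16) (s16 y16))
      (s16 (div16 (sub16 x16 y16) (s16 y16))) := by

  -- abbreviations
  have vh : ∀ {n} (a : ℕ) (v : Fin n → ℕ), Matrix.vecHead (Matrix.vecCons a v) = a :=
    fun a v => rfl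
  refine ⟨⟨?_, ?_⟩, ⟨?_, ?_⟩, ⟨?_, ?_⟩, ⟨?_, ?_⟩, ⟨?_, ?_⟩, ⟨?_, ?_⟩⟩
  -- rule 1: p(0) > 0
  · intro α
    show RC (· < ·) (0 : ℕ) 0
    right; rfl
  · exact SPO.subEq ⟨0, Nat.succ_pos _⟩ rfl
  -- rule 2: p(s(x)) > x
  · intro α
    show RC (· < ·) (α 0) (α 0 + 1)
    left; omega
  · exact SPO.sub ⟨0, Nat.succ_pos _⟩ (SPO.subEq ⟨0, Nat.succ_pos _⟩ rfl)
  -- rule 3: x − 0 > x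
  · intro α
    show RC (· < ·) (α 0) (α 0)
    right; rfl
  · exact SPO.subEq ⟨0, Nat.succ_pos _⟩ rfl
  -- rule 4: x − s(y) > p(x) − y
  · intro α
    show RC (· < ·) (α 0) (α 0)
    right; rfl
  · have hSx : SPO (QGES ar16 I16 (· < ·) prec Im16) (QGTS ar16 I16 (· < ·) prec Im16)
        (sub16 x16 (s16 y16)) x16 := SPO.subEq ⟨0, Nat.succ_pos _⟩ rfl
    have hSy : SPO (QGES ar16 I16 (· < ·) prec Im16) (QGTS ar16 I16 (· < ·) prec Im16)
        (sub16 x16 (s16 y16)) y16 := SPO.sub ⟨1, Nat.succ_lt_succ (Nat.succ_pos _)⟩ (SPO.subEq ⟨0, Nat.succ_pos _⟩ rfl)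
    have hSpx : SPO (QGES ar16 I16 (· < ·) prec Im16) (QGTS ar16 I16 (· < ·) prec Im16)
        (sub16 x16 (s16 y16)) (p16 x16) := by
      refine SPO.gt (fun j => ?_) ⟨3, ![x16, s16 y16], 2, ![x16], rfl, rfl, Or.inl ?_⟩
      · fin_cases j; exact hSx
      · intro α
        show (0 : ℕ) < α 1 + 1
        omega
    refine SPO.gt (fun j => ?_) ⟨3, ![x16, s16 y16], 3, ![p16 x16, y16], rfl, rfl, Or.inl ?_⟩
    · fin_cases j
      · exact hSpx
      · exact hSy
    · intro α
      show α 1 < α 1 + 1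
      omega
  -- rule 5: 0 ÷ s(y) > 0
  · intro α
    show RC (· < ·) (0 : ℕ) 0
    right; rfl
  · exact SPO.subEq ⟨0, Nat.succ_pos _⟩ rfl
  -- rule 6: s(x) ÷ s(y) > s((x − y) ÷ s(y))
  · intro α
    show RC (· < ·) (α 0 + 1) (α 0 + 1)
    right; rfl
  · have hSx : SPO (QGES ar16 I16 (· < ·) prec Im16) (QGTS ar16 I16 (· < ·) prec Im16)
        (div16 (s16 x16) (s16 y16)) x16 := SPO.sub ⟨0, Nat.succ_pos _⟩ (SPO.subEq ⟨0, Nat.succ_pos _⟩ rfl)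
    have hSy : SPO (QGES ar16 I16 (· < ·) prec Im16) (QGTS ar16 I16 (· < ·) prec Im16)
        (div16 (s16 x16) (s16 y16)) y16 := SPO.sub ⟨1, Nat.succ_lt_succ (Nat.succ_pos _)⟩ (SPO.subEq ⟨0, Nat.succ_pos _⟩ rfl)
    have hSsy : SPO (QGES ar16 I16 (· < ·) prec Im16) (QGTS ar16 I16 (· < ·) prec Im16)
        (div16 (s16 x16) (s16 y16)) (s16 y16) := SPO.subEq ⟨1, Nat.succ_lt_succ (Nat.succ_pos _)⟩ rfl
    have hSxy : SPO (QGES ar16 I16 (· < ·) prec Im16) (QGTS ar16 I16 (· < ·) prec Im16)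
        (div16 (s16 x16) (s16 y16)) (sub16 x16 y16) := by
      refine SPO.gt (fun j => ?_)
        ⟨4, ![s16 x16, s16 y16], 3, ![x16, y16], rfl, rfl, Or.inl ?_⟩
      · fin_cases j
        · exact hSx
        · exact hSy
      · intro α
        show α 1 < α 0 + 1 + (α 1 + 1)
        omega
    have hSU : SPO (QGES ar16 I16 (· < ·) prec Im16) (QGTS ar16 I16 (· < ·) prec Im16)
        (div16 (s16 x16) (s16 y16)) (div16 (sub16 x16 y16) (s16 y16)) := by
      refine SPO.gt (fun j => ?_)
        ⟨4, ![s16 x16, s16 y16], 4, ![sub16 x16 y16, s16 y16], rfl, rfl, Or.inl ?_⟩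
      · fin_cases j
        · exact hSxy
        · exact hSsy
      · intro α
        show α 0 + (α 1 + 1) < α 0 + 1 + (α 1 + 1)
        omega
    refine SPO.gt (fun j => ?_)
      ⟨4, ![s16 x16, s16 y16], 1, ![div16 (sub16 x16 y16) (s16 y16)], rfl, rfl, Or.inl ?_⟩
    · fin_cases j; exact hSU
    · intro α
      show (0 : ℕ) < α 0 + 1 + (α 1 + 1)
      omega
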